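/- Let M be the real symmetric 4×4 matrix with rows/columns indexed by {I, S12, S13, S23}, with all diagonal entries equal to 1, entries M(I,S12)=p, M(I,S13)=q, M(I,S23)=r, and all off-diagonal entries among {S12,S13,S23} equal to (s−1)/2 where s=p+q+r. Then M is positive semidefinite if and only if 0 ≤ p+q+r ≤ 3 and p² + q² + r² + 2(p+q+r) − 2(pq+pr+qr) ≤ 3. -/

import Mathlib

/-!
Write `s = p + q + r` and `e = p² + q² + r² + 2s - 2(pq + pr + qr)`. Completing the square in the
first coordinate reduces positive semidefiniteness to that of the Schur complement form
`G(x, y, z) = x² + y² + z² + (s - 1)(xy + xz + yz) - (px + qy + rz)²`, and splitting `(x, y, z)`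
along `(1, 1, 1)` and its orthogonal complement (Lagrange's identity for the latter part) gives
`(3 - s) G = s (x + y + z - (px + qy + rz))² + (3 - e) ((x - y)² + (y - z)² + (z - x)²) / 2 + Δ²`
with `Δ = det [1 1 1; p q r; x y z]`. This proves sufficiency when `s < 3`; when `s = 3` the
conditions force `p = q = r = 1` and `G = 0`. Conversely `(0, 1, 1, 1)` and `(-3, 1, 1, 1)` give
`0 ≤ 3s` and `0 ≤ 9 - 3s`, and on `(s - e, 1 - s + 2p, 1 - s + 2q, 1 - s + 2r)` the form takes the
value `(e - s)(3 - e)`, where `e - s ≥ s (3 - s) / 3 ≥ 0`.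
-/

open Matrix

noncomputable def triangleMatrix (p q r : ℝ) : Matrix (Fin 4) (Fin 4) ℝ :=
  !![1, p, q, r;
     p, 1, (p + q + r - 1) / 2, (p + q + r - 1) / 2;
     q, (p + q + r - 1) / 2, 1, (p + q + r - 1) / 2;
     r, (p + q + r - 1) / 2, (p + q + r - 1) / 2, 1]

def triangleForm (p q r a x y z : ℝ) : ℝ :=
  a ^ 2 + 2 * a * (p * x + q * y + r * z) + x ^ 2 + y ^ 2 + z ^ 2
    + (p + q + r - 1) * (x * y + x * z + y * z)

def triangleSchurForm (p q r x y z : ℝ) : ℝ :=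
  x ^ 2 + y ^ 2 + z ^ 2 + (p + q + r - 1) * (x * y + x * z + y * z)
    - (p * x + q * y + r * z) ^ 2

lemma triangleMatrix_isHermitian (p q r : ℝ) : (triangleMatrix p q r).IsHermitian := by
  ext i j
  fin_cases i <;> fin_cases j <;> rfl

lemma dotProduct_triangleMatrix_mulVec (p q r : ℝ) (v : Fin 4 → ℝ) :
    star v ⬝ᵥ (triangleMatrix p q r *ᵥ v) = triangleForm p q r (v 0) (v 1) (v 2) (v 3) := by
  simp [triangleMatrix, triangleForm, dotProduct, mulVec, Fin.sum_univ_four]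
  ring

lemma posSemidef_triangleMatrix_iff (p q r : ℝ) :
    (triangleMatrix p q r).PosSemidef ↔ ∀ a x y z, 0 ≤ triangleForm p q r a x y z := by
  simp only [posSemidef_iff_dotProduct_mulVec, triangleMatrix_isHermitian, true_and,
    dotProduct_triangleMatrix_mulVec]
  exact ⟨fun h a x y z => by simpa using h ![a, x, y, z], fun h v => h _ _ _ _⟩

lemma triangleForm_eq_sq_add_triangleSchurForm (p q r a x y z : ℝ) :
    triangleForm p q r a x y z =
      (a + (p * x + q * y + r * z)) ^ 2 + triangleSchurForm p q r x y z := by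
  unfold triangleForm triangleSchurForm
  ring

lemma three_sub_mul_triangleSchurForm (p q r x y z : ℝ) :
    (3 - (p + q + r)) * triangleSchurForm p q r x y z =
      (p + q + r) * (x + y + z - (p * x + q * y + r * z)) ^ 2
        + (3 - (p ^ 2 + q ^ 2 + r ^ 2 + 2 * (p + q + r) - 2 * (p * q + p * r + q * r)))
          * ((x - y) ^ 2 + (y - z) ^ 2 + (z - x) ^ 2) / 2
        + (p * (y - z) + q * (z - x) + r * (x - y)) ^ 2 := by
  unfold triangleSchurForm
  ring

lemma triangleSchurForm_nonneg {p q r : ℝ} (h0 : 0 ≤ p + q + r) (h3 : p + q + r ≤ 3)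
    (he : p ^ 2 + q ^ 2 + r ^ 2 + 2 * (p + q + r) - 2 * (p * q + p * r + q * r) ≤ 3)
    (x y z : ℝ) : 0 ≤ triangleSchurForm p q r x y z := by
  rcases h3.lt_or_eq with h3 | h3
  · refine nonneg_of_mul_nonneg_right ?_ (sub_pos.2 h3)
    rw [three_sub_mul_triangleSchurForm]
    positivity
  · obtain ⟨rfl, rfl, rfl⟩ : p = 1 ∧ q = 1 ∧ r = 1 := by
      refine ⟨?_, ?_, ?_⟩ <;>
        nlinarith [sq_nonneg (p - 1), sq_nonneg (q - 1), sq_nonneg (r - 1)]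
    exact le_of_eq (by unfold triangleSchurForm; ring)

lemma triangle_conditions_of_forall_triangleForm_nonneg {p q r : ℝ}
    (h : ∀ a x y z, 0 ≤ triangleForm p q r a x y z) :
    0 ≤ p + q + r ∧ p + q + r ≤ 3 ∧
      p ^ 2 + q ^ 2 + r ^ 2 + 2 * (p + q + r) - 2 * (p * q + p * r + q * r) ≤ 3 := by
  set s := p + q + r with hs
  set e := p ^ 2 + q ^ 2 + r ^ 2 + 2 * (p + q + r) - 2 * (p * q + p * r + q * r) with he
  have hs0 : 0 ≤ s := by
    have := h 0 1 1 1
    unfold triangleForm at this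
    linarith
  have hs3 : s ≤ 3 := by
    have := h (-3) 1 1 1
    unfold triangleForm at this
    linarith
  have hwitness : triangleForm p q r (s - e) (1 - s + 2 * p) (1 - s + 2 * q) (1 - s + 2 * r) =
      (e - s) * (3 - e) := by
    simp only [triangleForm, hs, he]
    ring
  have hes : s * (3 - s) / 3 ≤ e - s := by
    nlinarith [sq_nonneg (p - q), sq_nonneg (q - r), sq_nonneg (p - r)]
  have hprod := hwitness ▸ h (s - e) (1 - s + 2 * p) (1 - s + 2 * q) (1 - s + 2 * r)
  refine ⟨hs0, hs3, ?_⟩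
  nlinarith [mul_nonneg hs0 (sub_nonneg.2 hs3)]

theorem triangle_psd_iff (p q r : ℝ) :
    (!![1, p, q, r;
        p, 1, (p + q + r - 1) / 2, (p + q + r - 1) / 2;
        q, (p + q + r - 1) / 2, 1, (p + q + r - 1) / 2;
        r, (p + q + r - 1) / 2, (p + q + r - 1) / 2, 1] :
        Matrix (Fin 4) (Fin 4) ℝ).PosSemidef ↔
    (0 ≤ p + q + r ∧ p + q + r ≤ 3 ∧
      p ^ 2 + q ^ 2 + r ^ 2 + 2 * (p + q + r) - 2 * (p * q + p * r + q * r) ≤ 3) := by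
  refine (posSemidef_triangleMatrix_iff p q r).trans
    ⟨triangle_conditions_of_forall_triangleForm_nonneg, fun ⟨h0, h3, he⟩ a x y z => ?_⟩
  rw [triangleForm_eq_sq_add_triangleSchurForm]
  exact add_nonneg (sq_nonneg _) (triangleSchurForm_nonneg h0 h3 he x y z)
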